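/- arXiv:2208.14373 — 2 statements merged into one kernel-verified Lean document; each statement's English description precedes it below -/
import Mathlib

section
/- Explicit formula for the transformation matrix, pure scaling case: Let α', α > 0 and u', u ∈ ℝ with α ≠ α' and u = u', and set a := α/α', K_{n,m} := 2^{(m−n)/2}·(m!)^{−1/2}·(n!)^{1/2}. Then for all n, m ∈ ℕ with n ≥ m: if n − m is even, ℙ_{n,m} = K_{n,m}·a^{−(m+1)}·(1/a² − 1)^{(n−m)/2}/((n−m)/2)!, and if n − m is odd, ℙ_{n,m} = 0. -/
open MeasureTheory Real Finset

/-- Physicists' Hermite polynomials: `H 0 x = 1`, `H 1 x = 2x`,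
`H (n+1) x = 2x · H n x − 2n · H (n−1) x`. -/
noncomputable def physHermite : ℕ → ℝ → ℝ
  | 0 => fun _ => 1
  | 1 => fun x => 2 * x
  | (n + 2) => fun x => 2 * x * physHermite (n + 1) x - 2 * ((n : ℝ) + 1) * physHermite n x

/-- Asymmetrically weighted Hermite function
`ψ_n^{α,u}(v) = (π·2^n·n!)^{-1/2} · H_n((v−u)/α) · exp(−((v−u)/α)²)`. -/
noncomputable def awHermite (α u : ℝ) (n : ℕ) (v : ℝ) : ℝ :=
  (Real.sqrt (Real.pi * 2 ^ n * (n.factorial : ℝ)))⁻¹ * physHermite n ((v - u) / α) *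
    Real.exp (-((v - u) / α) ^ 2)

/-- The weight `ω(v) = √π · α⁻¹ · exp(((v−u)/α)²)`. -/
noncomputable def hermiteWeight (α u : ℝ) (v : ℝ) : ℝ :=
  Real.sqrt Real.pi * α⁻¹ * Real.exp (((v - u) / α) ^ 2)

/-- Transformation matrix entries `ℙ_{n,m} = ∫ ψ_m^{α',u'}(v) · ψ_n^{α,u}(v) · ω(v) dv`. -/
noncomputable def transferMatrix (α' u' α u : ℝ) (n m : ℕ) : ℝ :=
  ∫ v : ℝ, awHermite α' u' m v * awHermite α u n v * hermiteWeight α u v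

/-- The coefficient `K_{n,m} = 2^{(m−n)/2} · (m!)^{−1/2} · (n!)^{1/2}`. -/
noncomputable def Kcoef (n m : ℕ) : ℝ :=
  (2 : ℝ) ^ (((m : ℝ) - (n : ℝ)) / 2) * (Real.sqrt (m.factorial : ℝ))⁻¹ *
    Real.sqrt (n.factorial : ℝ)

/-!
For `u = u'` the substitution `x = (v - u) / α` turns `ℙ_{n,m}` into a normalising constant times
`J(n, m) = ∫ H_m(a x) H_n(x) exp(-a² x²) dx` with `a = α / α'`. Integrating
`(P(x) exp(-a² x²))'` over `ℝ` for suitable polynomials `P`, and using `H_n' = 2n H_{n-1}` together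
with the three-term recurrence, gives `J(n, m + 1) = (2n / a) J(n - 1, m)` and
`J(n + 1, 0) = 2n (1 / a² - 1) J(n - 1, 0)`. Starting from the Gaussian integral `J(0, 0) = √π / a`,
these two recurrences determine every `J(n, m)` with `m ≤ n`.
-/

open Polynomial Filter Topology

noncomputable def hermitePoly : ℕ → ℝ[X]
  | 0 => 1
  | 1 => C 2 * X
  | (n + 2) => C 2 * X * hermitePoly (n + 1) - C (2 * ((n : ℝ) + 1)) * hermitePoly n

theorem physHermite_eq_eval (n : ℕ) (x : ℝ) : physHermite n x = (hermitePoly n).eval x := by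
  induction n using Nat.twoStepInduction with
  | zero => simp [physHermite, hermitePoly]
  | one => simp [physHermite, hermitePoly]
  | more n ih₁ ih₂ =>
    simp only [physHermite, hermitePoly, ih₁, ih₂, eval_sub, eval_mul, eval_C, eval_X]

-- At `n = 0` the truncated `n - 1` is harmless: its coefficient `2 * n` vanishes.
theorem hermitePoly_succ (n : ℕ) :
    hermitePoly (n + 1) = C 2 * X * hermitePoly n - C (2 * (n : ℝ)) * hermitePoly (n - 1) := by
  cases n <;> simp [hermitePoly]

theorem derivative_hermitePoly (n : ℕ) :
    derivative (hermitePoly n) = C (2 * (n : ℝ)) * hermitePoly (n - 1) := by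
  induction n using Nat.twoStepInduction with
  | zero => simp [hermitePoly]
  | one => simp [hermitePoly]
  | more n ih₁ ih₂ =>
    rw [hermitePoly, derivative_sub, derivative_mul, derivative_mul, derivative_mul, ih₁, ih₂]
    simp only [derivative_C, derivative_X, zero_mul, zero_add, mul_one, Nat.add_sub_cancel,
      show n + 2 - 1 = n + 1 from rfl]
    rw [hermitePoly_succ n]
    simp only [map_mul, map_add, map_natCast, map_one, Nat.cast_add, Nat.cast_one]
    ring

section Gaussian

variable {b : ℝ}

theorem integrable_eval_mul_exp_neg_mul_sq (hb : 0 < b) (P : ℝ[X]) :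
    Integrable fun x : ℝ => P.eval x * Real.exp (-b * x ^ 2) := by
  induction P using Polynomial.induction_on' with
  | add P Q hP hQ =>
    simp only [eval_add, add_mul]
    exact hP.add hQ
  | monomial k c =>
    simpa only [eval_monomial, mul_assoc, Real.rpow_natCast] using
      (integrable_rpow_mul_exp_neg_mul_sq hb (s := k)
        (neg_one_lt_zero.trans_le k.cast_nonneg)).const_mul c

theorem tendsto_eval_mul_exp_neg_mul_sq_cocompact (hb : 0 < b) (P : ℝ[X]) :
    Tendsto (fun x : ℝ => P.eval x * Real.exp (-b * x ^ 2)) (cocompact ℝ) (𝓝 0) := by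
  induction P using Polynomial.induction_on' with
  | add P Q hP hQ => simpa only [eval_add, add_mul, add_zero] using hP.add hQ
  | monomial k c =>
    have hmono : Tendsto (fun x : ℝ => x ^ k * Real.exp (-b * x ^ 2)) (cocompact ℝ) (𝓝 0) := by
      rw [tendsto_zero_iff_norm_tendsto_zero]
      simpa only [norm_mul, norm_pow, Real.norm_eq_abs, Real.abs_exp, Real.rpow_natCast] using
        tendsto_rpow_abs_mul_exp_neg_mul_sq_cocompact hb k
    simpa only [eval_monomial, mul_assoc, mul_zero] using hmono.const_mul c

theorem integral_derivative_sub_mul_exp_neg_mul_sq (hb : 0 < b) (P : ℝ[X]) :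
    ∫ x : ℝ, ((derivative P).eval x - 2 * b * x * P.eval x) * Real.exp (-b * x ^ 2) = 0 := by
  have hderiv (x : ℝ) : HasDerivAt (fun y => P.eval y * Real.exp (-b * y ^ 2))
      (((derivative P).eval x - 2 * b * x * P.eval x) * Real.exp (-b * x ^ 2)) x := by
    have hexp : HasDerivAt (fun y : ℝ => -b * y ^ 2) (-b * (2 * x)) x := by
      simpa using (hasDerivAt_pow 2 x).const_mul (-b)
    exact ((P.hasDerivAt x).mul hexp.exp).congr_deriv (by ring)
  have hint : Integrable fun x : ℝ =>
      ((derivative P).eval x - 2 * b * x * P.eval x) * Real.exp (-b * x ^ 2) := by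
    refine (integrable_eval_mul_exp_neg_mul_sq hb (derivative P - C (2 * b) * X * P)).congr
      (.of_forall fun x => ?_)
    simp only [eval_sub, eval_mul, eval_C, eval_X]
  have hlim := tendsto_eval_mul_exp_neg_mul_sq_cocompact hb P
  simpa using integral_of_hasDerivAt_of_tendsto hderiv hint
    (hlim.mono_left atBot_le_cocompact) (hlim.mono_left atTop_le_cocompact)

end Gaussian

noncomputable def hermiteOverlap (a : ℝ) (n m : ℕ) : ℝ :=
  ∫ x : ℝ, (hermitePoly m).eval (a * x) * (hermitePoly n).eval x * Real.exp (-a ^ 2 * x ^ 2)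

section Overlap

variable {a : ℝ}

theorem integrable_hermiteOverlap_integrand (ha : a ≠ 0) (n m : ℕ) :
    Integrable fun x : ℝ =>
      (hermitePoly m).eval (a * x) * (hermitePoly n).eval x * Real.exp (-a ^ 2 * x ^ 2) := by
  refine (integrable_eval_mul_exp_neg_mul_sq (sq_pos_of_ne_zero ha)
    ((hermitePoly m).comp (C a * X) * hermitePoly n)).congr (.of_forall fun x => ?_)
  simp only [eval_mul, eval_comp, eval_C, eval_X]

theorem hermiteOverlap_eq_of_integration_by_parts (ha : a ≠ 0) (P : ℝ[X]) {n₁ m₁ n₂ m₂ : ℕ}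
    (c : ℝ) (hP : ∀ x, (derivative P).eval x - 2 * a ^ 2 * x * P.eval x =
      c * ((hermitePoly m₁).eval (a * x) * (hermitePoly n₁).eval x) -
        (hermitePoly m₂).eval (a * x) * (hermitePoly n₂).eval x) :
    hermiteOverlap a n₂ m₂ = c * hermiteOverlap a n₁ m₁ := by
  have h := integral_derivative_sub_mul_exp_neg_mul_sq (sq_pos_of_ne_zero ha) P
  simp_rw [hP, sub_mul, mul_assoc c] at h
  rw [integral_sub ((integrable_hermiteOverlap_integrand ha n₁ m₁).const_mul c)
    (integrable_hermiteOverlap_integrand ha n₂ m₂), integral_const_mul, sub_eq_zero] at h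
  exact h.symm

theorem hermiteOverlap_succ_right (ha : a ≠ 0) (n m : ℕ) :
    hermiteOverlap a n (m + 1) = 2 * n / a * hermiteOverlap a (n - 1) m := by
  refine hermiteOverlap_eq_of_integration_by_parts ha
    (C a⁻¹ * ((hermitePoly m).comp (C a * X) * hermitePoly n)) _ fun x => ?_
  rw [derivative_C_mul, derivative_mul, derivative_comp, derivative_hermitePoly n,
    derivative_hermitePoly m, hermitePoly_succ m]
  simp only [eval_add, eval_mul, eval_sub, eval_C, eval_X, eval_comp, derivative_mul,
    derivative_C, derivative_X, zero_mul, zero_add, mul_one]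
  field_simp
  ring

theorem hermiteOverlap_succ_zero (ha : a ≠ 0) (n : ℕ) :
    hermiteOverlap a (n + 1) 0 = 2 * n * (1 / a ^ 2 - 1) * hermiteOverlap a (n - 1) 0 := by
  refine hermiteOverlap_eq_of_integration_by_parts ha (C (a ^ 2)⁻¹ * hermitePoly n) _
    fun x => ?_
  rw [derivative_C_mul, derivative_hermitePoly n, hermitePoly_succ n]
  simp only [hermitePoly, eval_one, eval_mul, eval_sub, eval_C, eval_X]
  field_simp
  ring

theorem hermiteOverlap_zero_zero (ha : 0 < a) : hermiteOverlap a 0 0 = √π / a := by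
  simp only [hermiteOverlap, hermitePoly, eval_one, one_mul, integral_gaussian,
    Real.sqrt_div' π (sq_nonneg a), Real.sqrt_sq ha.le]

theorem hermiteOverlap_two_mul_zero (ha : 0 < a) (p : ℕ) :
    hermiteOverlap a (2 * p) 0 =
      √π / a * (1 / a ^ 2 - 1) ^ p * (2 * p).factorial / p.factorial := by
  induction p with
  | zero => simpa using hermiteOverlap_zero_zero ha
  | succ p ih =>
    rw [show 2 * (p + 1) = 2 * p + 1 + 1 by ring, hermiteOverlap_succ_zero ha.ne',
      Nat.add_sub_cancel, ih, Nat.factorial_succ, Nat.factorial_succ, Nat.factorial_succ]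
    generalize 1 / a ^ 2 - 1 = r
    push_cast
    field_simp
    ring

theorem hermiteOverlap_two_mul_add_one_zero (ha : a ≠ 0) (p : ℕ) :
    hermiteOverlap a (2 * p + 1) 0 = 0 := by
  induction p with
  | zero => simpa using hermiteOverlap_succ_zero ha 0
  | succ p ih =>
    rw [show 2 * (p + 1) + 1 = 2 * p + 2 + 1 by ring, hermiteOverlap_succ_zero ha,
      show 2 * p + 2 - 1 = 2 * p + 1 from rfl, ih, mul_zero]

theorem hermiteOverlap_add_right (ha : a ≠ 0) (k m : ℕ) :
    hermiteOverlap a (k + m) m =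
      (2 / a) ^ m * (k + m).factorial / k.factorial * hermiteOverlap a k 0 := by
  induction m with
  | zero => simp [k.factorial_ne_zero]
  | succ m ih =>
    rw [← add_assoc, hermiteOverlap_succ_right ha, Nat.add_sub_cancel, ih, Nat.factorial_succ]
    push_cast
    ring

theorem hermiteOverlap_two_mul_add (ha : 0 < a) (p m : ℕ) :
    hermiteOverlap a (2 * p + m) m =
      √π * 2 ^ m * (2 * p + m).factorial / a ^ (m + 1) * (1 / a ^ 2 - 1) ^ p / p.factorial := by
  rw [hermiteOverlap_add_right ha.ne', hermiteOverlap_two_mul_zero ha, div_pow]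
  generalize 1 / a ^ 2 - 1 = r
  field_simp [(2 * p).factorial_ne_zero]
  ring

theorem hermiteOverlap_two_mul_add_one_add (ha : a ≠ 0) (p m : ℕ) :
    hermiteOverlap a (2 * p + 1 + m) m = 0 := by
  rw [hermiteOverlap_add_right ha, hermiteOverlap_two_mul_add_one_zero ha, mul_zero]

end Overlap

theorem transferMatrix_eq_hermiteOverlap {α : ℝ} (hα : 0 < α) (α' u : ℝ) (n m : ℕ) :
    transferMatrix α' u α u n m =
      (√(π * 2 ^ m * m.factorial))⁻¹ * (√(π * 2 ^ n * n.factorial))⁻¹ * √π *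
        hermiteOverlap (α / α') n m := by
  set g : ℝ → ℝ := fun x => (hermitePoly m).eval (α / α' * x) * (hermitePoly n).eval x *
    Real.exp (-(α / α') ^ 2 * x ^ 2)
  have hintegrand (v : ℝ) : awHermite α' u m v * awHermite α u n v * hermiteWeight α u v =
      (√(π * 2 ^ m * m.factorial))⁻¹ * (√(π * 2 ^ n * n.factorial))⁻¹ * √π * α⁻¹ *
        g ((v - u) / α) := by
    have hexp : Real.exp (-((v - u) / α) ^ 2) * Real.exp (((v - u) / α) ^ 2) = 1 := by
      rw [← Real.exp_add, neg_add_cancel, Real.exp_zero]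
    have hscale : α / α' * ((v - u) / α) = (v - u) / α' := by field_simp
    simp only [awHermite, hermiteWeight, physHermite_eq_eval, g, hscale, neg_mul, ← mul_pow]
    linear_combination (√(π * 2 ^ m * m.factorial))⁻¹ * (√(π * 2 ^ n * n.factorial))⁻¹ * √π *
      α⁻¹ * (hermitePoly m).eval ((v - u) / α') * (hermitePoly n).eval ((v - u) / α) *
      Real.exp (-((v - u) / α') ^ 2) * hexp
  rw [transferMatrix, funext hintegrand, integral_const_mul,
    integral_sub_right_eq_self (fun w => g (w / α)), Measure.integral_comp_div,
    abs_of_pos hα, smul_eq_mul, mul_assoc _ α⁻¹, inv_mul_cancel_left₀ hα.ne']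
  rfl

theorem Kcoef_eq (n m : ℕ) :
    Kcoef n m = (√(π * 2 ^ m * m.factorial))⁻¹ * (√(π * 2 ^ n * n.factorial))⁻¹ * π * 2 ^ m *
      n.factorial := by
  have hsqrt (k : ℕ) : √((2 : ℝ) ^ k) = 2 ^ ((k : ℝ) / 2) := by
    rw [Real.sqrt_eq_rpow, ← Real.rpow_natCast, ← Real.rpow_mul zero_le_two, mul_one_div]
  have hpow : (2 : ℝ) ^ m = 2 ^ ((m : ℝ) / 2) * 2 ^ ((m : ℝ) / 2) := by
    rw [← hsqrt, Real.mul_self_sqrt (by positivity)]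
  rw [Kcoef, sub_div, Real.rpow_sub two_pos, Real.sqrt_mul (by positivity),
    Real.sqrt_mul (by positivity), Real.sqrt_mul (by positivity), Real.sqrt_mul (by positivity),
    hsqrt, hsqrt, hpow]
  field_simp
  rw [Real.sq_sqrt (by positivity), Real.sq_sqrt (by positivity), mul_comm]

theorem transferMatrix_pure_scaling_general (α' α u' u : ℝ) (hα' : 0 < α') (hα : 0 < α)
    (hueq : u = u') (a : ℝ) (ha : a = α / α')
    (n m : ℕ) (hnm : m ≤ n) :
    (Even (n - m) →
      transferMatrix α' u' α u n m
        = Kcoef n m * (a ^ (m + 1))⁻¹ * (1 / a ^ 2 - 1) ^ ((n - m) / 2) /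
            (((n - m) / 2).factorial : ℝ)) ∧
    (Odd (n - m) → transferMatrix α' u' α u n m = 0) := by
  subst hueq
  obtain ⟨k, rfl⟩ := Nat.exists_eq_add_of_le' hnm
  have ha_pos : 0 < a := ha ▸ div_pos hα hα'
  rw [Nat.add_sub_cancel, transferMatrix_eq_hermiteOverlap hα, ← ha]
  refine ⟨fun ⟨p, hp⟩ => ?_, fun ⟨p, hp⟩ => ?_⟩
  · obtain rfl : k = 2 * p := by omega
    rw [hermiteOverlap_two_mul_add ha_pos, Nat.mul_div_cancel_left p two_pos, Kcoef_eq]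
    field_simp
    rw [Real.sq_sqrt pi_pos.le]
  · rw [hp, hermiteOverlap_two_mul_add_one_add ha_pos.ne', mul_zero]

/-- Explicit formula for the transformation matrix, pure scaling case
(`α ≠ α'` and `u = u'`). -/
theorem transferMatrix_pure_scaling (α' α u' u : ℝ) (hα' : 0 < α') (hα : 0 < α)
    (hαne : α ≠ α') (hueq : u = u') (a : ℝ) (ha : a = α / α')
    (n m : ℕ) (hnm : m ≤ n) :
    (Even (n - m) →
      transferMatrix α' u' α u n m
        = Kcoef n m * (a ^ (m + 1))⁻¹ * (1 / a ^ 2 - 1) ^ ((n - m) / 2) /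
            (((n - m) / 2).factorial : ℝ)) ∧
    (Odd (n - m) → transferMatrix α' u' α u n m = 0) :=
  transferMatrix_pure_scaling_general α' α u' u hα' hα hueq a ha n m hnm
end

section
/- The transformation matrix is lower triangular: For all α', α > 0 and u', u ∈ ℝ, and all n, m ∈ ℕ with n < m, ℙ_{n,m} = 0. -/
open MeasureTheory Real Finset

/-! Substituting `y = (v - u') / α'`, the weight cancels the Gaussian factor of `ψ_n^{α,u}`, and
`ℙ_{n,m}` becomes a multiple of `∫ q(y) H_m(y) e^{-y²} dy`, where `q` is `H_n` composed with an
affine map, hence a polynomial of degree at most `n`. Since `(H_m e^{-y²})' = -H_{m+1} e^{-y²}`,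
each integration by parts trades `m` for `m - 1` and `q` for `q'`, so the integral vanishes as soon
as `deg q < m`. -/

open Polynomial

noncomputable def physHermitePoly : ℕ → ℝ[X]
  | 0 => 1
  | 1 => C 2 * X
  | (n + 2) => C 2 * X * physHermitePoly (n + 1) - C (2 * ((n : ℝ) + 1)) * physHermitePoly n

theorem eval_physHermitePoly (n : ℕ) (x : ℝ) : (physHermitePoly n).eval x = physHermite n x := by
  induction n using Nat.twoStepInduction with
  | zero => simp [physHermitePoly, physHermite]
  | one => simp [physHermitePoly, physHermite]
  | more n ih1 ih2 => simp [physHermitePoly, physHermite, ih1, ih2]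

theorem natDegree_physHermitePoly_le (n : ℕ) : (physHermitePoly n).natDegree ≤ n := by
  induction n using Nat.twoStepInduction with
  | zero => simp [physHermitePoly]
  | one => simp [physHermitePoly]
  | more n ih1 ih2 =>
    rw [physHermitePoly]
    refine (natDegree_sub_le _ _).trans (max_le ?_ ?_)
    · have hlin : (C (2 : ℝ) * X).natDegree ≤ 1 := by simp
      exact natDegree_mul_le.trans (by omega)
    · exact natDegree_C_mul_le _ _ |>.trans (by omega)

theorem derivative_physHermitePoly_succ (n : ℕ) :
    derivative (physHermitePoly (n + 1)) = C (2 * ((n : ℝ) + 1)) * physHermitePoly n := by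
  induction n using Nat.twoStepInduction with
  | zero => simp [physHermitePoly]
  | one => simp [physHermitePoly]; ring
  | more n ih1 ih2 =>
    rw [physHermitePoly]
    simp only [derivative_sub, derivative_mul, derivative_C, derivative_X, ih1, ih2]
    have h : physHermitePoly (n + 2) = C 2 * X * physHermitePoly (n + 1)
        - C (2 * ((n : ℝ) + 1)) * physHermitePoly n := rfl
    push_cast at h ⊢
    simp only [map_mul, map_add, map_natCast, map_one, C_ofNat] at h ⊢
    linear_combination (-2 * (n + 2 : ℝ[X])) * h

theorem physHermitePoly_succ (n : ℕ) :
    physHermitePoly (n + 1) = C 2 * X * physHermitePoly n - derivative (physHermitePoly n) := by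
  cases n with
  | zero => simp [physHermitePoly]
  | succ n => rw [derivative_physHermitePoly_succ, physHermitePoly]

theorem integrable_eval_mul_exp_neg_sq (p : ℝ[X]) :
    Integrable fun x : ℝ => p.eval x * exp (-x ^ 2) := by
  induction p using Polynomial.induction_on' with
  | add p q hp hq => simpa only [eval_add, add_mul, Pi.add_def] using hp.add hq
  | monomial n a =>
    have h := integrable_rpow_mul_exp_neg_mul_sq one_pos
      (by exact_mod_cast neg_one_lt_zero.trans_le n.cast_nonneg : (-1 : ℝ) < n)
    simpa only [eval_monomial, Real.rpow_natCast, neg_one_mul, mul_assoc] using h.const_mul a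

noncomputable def hermiteGaussian (n : ℕ) (x : ℝ) : ℝ :=
  (physHermitePoly n).eval x * exp (-x ^ 2)

theorem hasDerivAt_hermiteGaussian (n : ℕ) (x : ℝ) :
    HasDerivAt (hermiteGaussian n) (-hermiteGaussian (n + 1) x) x := by
  have hexp : HasDerivAt (fun y : ℝ => exp (-y ^ 2)) (exp (-x ^ 2) * -(2 * x)) x := by
    simpa using ((hasDerivAt_pow 2 x).fun_neg).exp
  refine (((physHermitePoly n).hasDerivAt x).mul hexp : HasDerivAt (hermiteGaussian n) _ x)
    |>.congr_deriv ?_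
  rw [hermiteGaussian, physHermitePoly_succ]
  simp only [eval_sub, eval_mul, eval_C, eval_X]
  ring

theorem integrable_eval_mul_hermiteGaussian (p : ℝ[X]) (n : ℕ) :
    Integrable fun x : ℝ => p.eval x * hermiteGaussian n x := by
  simpa only [hermiteGaussian, eval_mul, mul_assoc] using
    integrable_eval_mul_exp_neg_sq (p * physHermitePoly n)

theorem integral_eval_mul_hermiteGaussian_eq_zero {p : ℝ[X]} {m : ℕ} (hp : p.natDegree < m) :
    ∫ x : ℝ, p.eval x * hermiteGaussian m x = 0 := by
  induction m generalizing p with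
  | zero => exact absurd hp (Nat.not_lt_zero _)
  | succ m ih =>
    have hparts : ∫ x : ℝ, p.eval x * -hermiteGaussian (m + 1) x
        = -∫ x : ℝ, (derivative p).eval x * hermiteGaussian m x :=
      integral_mul_deriv_eq_deriv_mul_of_integrable (fun x _ => p.hasDerivAt x)
        (fun x _ => hasDerivAt_hermiteGaussian m x)
        (by simpa only [Pi.mul_def, mul_neg, Pi.neg_def] using
          (integrable_eval_mul_hermiteGaussian p (m + 1)).neg)
        (integrable_eval_mul_hermiteGaussian _ m) (integrable_eval_mul_hermiteGaussian p m)
    simp only [mul_neg, integral_neg, neg_inj] at hparts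
    rw [hparts]
    rcases eq_or_ne p.natDegree 0 with hp0 | hp0
    · simp [derivative_of_natDegree_zero hp0]
    · exact ih ((natDegree_derivative_lt hp0).trans_le (Nat.lt_succ_iff.mp hp))

theorem integral_comp_sub_div {E : Type*} [NormedAddCommGroup E] [NormedSpace ℝ E]
    (g : ℝ → E) (a b : ℝ) : ∫ v : ℝ, g ((v - b) / a) = |a| • ∫ y : ℝ, g y :=
  (integral_sub_right_eq_self (fun w => g (w / a)) b).trans (Measure.integral_comp_div g a)

theorem eval_div_eq_eval_comp (p : ℝ[X]) {α' : ℝ} (hα' : α' ≠ 0) (α u' u v : ℝ) :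
    p.eval ((v - u) / α) = (p.comp (C (α' / α) * X + C ((u' - u) / α))).eval ((v - u') / α') := by
  simp only [eval_comp, eval_add, eval_mul, eval_C, eval_X]
  congr 1
  field_simp
  ring

theorem awHermite_eq (α u : ℝ) (n : ℕ) (v : ℝ) :
    awHermite α u n v = (√(π * 2 ^ n * n.factorial))⁻¹ * hermiteGaussian n ((v - u) / α) := by
  rw [awHermite, hermiteGaussian, eval_physHermitePoly, mul_assoc]

theorem awHermite_mul_hermiteWeight (α u : ℝ) (n : ℕ) (v : ℝ) :
    awHermite α u n v * hermiteWeight α u v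
      = (√(π * 2 ^ n * n.factorial))⁻¹ * (√π * α⁻¹) * physHermite n ((v - u) / α) := by
  have hcancel : exp (-((v - u) / α) ^ 2) * exp (((v - u) / α) ^ 2) = 1 := by
    rw [← exp_add, neg_add_cancel, exp_zero]
  rw [awHermite, hermiteWeight]
  linear_combination (√(π * 2 ^ n * n.factorial))⁻¹ * physHermite n ((v - u) / α) *
    (√π * α⁻¹) * hcancel

theorem transferMatrix_lower_triangular_general (α' α u' u : ℝ) (hα' : 0 < α')
    (n m : ℕ) (hnm : n < m) :
    transferMatrix α' u' α u n m = 0 := by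
  set q := (physHermitePoly n).comp (C (α' / α) * X + C ((u' - u) / α))
  have hq : q.natDegree < m := calc
    q.natDegree ≤ (physHermitePoly n).natDegree * 1 :=
      natDegree_comp_le.trans (Nat.mul_le_mul_left _ natDegree_linear_le)
    _ ≤ n := by simpa using natDegree_physHermitePoly_le n
    _ < m := hnm
  obtain ⟨c, hc⟩ : ∃ c : ℝ, ∀ v, awHermite α' u' m v * awHermite α u n v * hermiteWeight α u v
      = c * (q.eval ((v - u') / α') * hermiteGaussian m ((v - u') / α')) := by
    refine ⟨(√(π * 2 ^ m * m.factorial))⁻¹ * ((√(π * 2 ^ n * n.factorial))⁻¹ * (√π * α⁻¹)),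
      fun v => ?_⟩
    rw [mul_assoc, awHermite_mul_hermiteWeight, awHermite_eq, ← eval_physHermitePoly,
      eval_div_eq_eval_comp _ hα'.ne' α u' u v]
    ring
  rw [transferMatrix, integral_congr_ae (.of_forall hc),
    integral_comp_sub_div (fun y => c * (q.eval y * hermiteGaussian m y)), integral_const_mul,
    integral_eval_mul_hermiteGaussian_eq_zero hq, mul_zero, smul_zero]

/-- The transformation matrix is lower triangular. -/
theorem transferMatrix_lower_triangular (α' α u' u : ℝ) (hα' : 0 < α') (hα : 0 < α)
    (n m : ℕ) (hnm : n < m) :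
    transferMatrix α' u' α u n m = 0 :=
  transferMatrix_lower_triangular_general α' α u' u hα' n m hnm
end
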